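/- Let g := gcd(a1−a2, b1−b2) and let p be a prime with p ∤ D and p > 2*D/g + 1. For all positive integers n and ℓ, the minimum of h(S) over all finite multisets S of points of M(Δ) of cardinality n*ℓ in which every point occurs with multiplicity at most n, equals n times the minimum of h(S) over all subsets S ⊆ M(Δ) of cardinality ℓ. -/

import Mathlib

open Finset

noncomputable section

/-- The weight of a lattice point `P`: `w(P) = ((b1-b2)*x + (a2-a1)*y) / D`
where `D = a2*b1 - a1*b2`. -/
def wt (a1 b1 a2 b2 : ℤ) (P : ℤ × ℤ) : ℚ :=
  (((b1 - b2) * P.1 + (a2 - a1) * P.2 : ℤ) : ℚ) / ((a2 * b1 - a1 * b2 : ℤ) : ℚ)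

/-- The lattice points of the cone spanned by the triangle with vertices
`O`, `P1 = (a1,b1)`, `P2 = (a2,b2)`. -/
def MDelta (a1 b1 a2 b2 : ℤ) : Set (ℤ × ℤ) :=
  {P | ∃ s t : ℚ, 0 ≤ s ∧ 0 ≤ t ∧
    (P.1 : ℚ) = s * a1 + t * a2 ∧ (P.2 : ℚ) = s * b1 + t * b2}

/-- The lattice generated by `P1` and `P2`. -/
def Lambda (a1 b1 a2 b2 : ℤ) : Set (ℤ × ℤ) :=
  {P | ∃ m n : ℤ, P = (m * a1 + n * a2, m * b1 + n * b2)}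

/-- The lattice points of the fundamental parallelogram
`{s*P1 + t*P2 : 0 ≤ s,t < 1}`. -/
def squareInt (a1 b1 a2 b2 : ℤ) : Set (ℤ × ℤ) :=
  {P | ∃ s t : ℚ, 0 ≤ s ∧ s < 1 ∧ 0 ≤ t ∧ t < 1 ∧
    (P.1 : ℚ) = s * a1 + t * a2 ∧ (P.2 : ℚ) = s * b1 + t * b2}

/-- `h(S, τ) = Σ_{P ∈ S} ⌈w(p·τ(P) - P)⌉` for a multiset indexed by `f` and a
permutation `τ` of the indices. -/
def hTau (p a1 b1 a2 b2 : ℤ) {n : ℕ} (f : Fin n → ℤ × ℤ)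
    (τ : Equiv.Perm (Fin n)) : ℤ :=
  ∑ i, ⌈wt a1 b1 a2 b2 (p • f (τ i) - f i)⌉

/-- `h2(S, τ) = Σ_{P ∈ S} R(w(p·τ(P) - P))` where `R(r) = ⌈r⌉ - r`. -/
def h2Tau (p a1 b1 a2 b2 : ℤ) {n : ℕ} (f : Fin n → ℤ × ℤ)
    (τ : Equiv.Perm (Fin n)) : ℚ :=
  ∑ i, ((⌈wt a1 b1 a2 b2 (p • f (τ i) - f i)⌉ : ℚ)
        - wt a1 b1 a2 b2 (p • f (τ i) - f i))

/-- A canonical indexing of a multiset. -/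
def listFn (S : Multiset (ℤ × ℤ)) : Fin S.toList.length → ℤ × ℤ := S.toList.get

/-- `h(S)`: the minimum of `h(S,τ)` over all permutations `τ` of `S`. -/
def hMin (p a1 b1 a2 b2 : ℤ) (S : Multiset (ℤ × ℤ)) : ℤ :=
  Finset.univ.inf' (Finset.univ_nonempty_iff.mpr ⟨1⟩)
    fun τ : Equiv.Perm (Fin S.toList.length) => hTau p a1 b1 a2 b2 (listFn S) τ

/-- `h2(S)`: the minimum of `h2(S,τ)` over all permutations `τ` of `S`. -/
def h2Min (p a1 b1 a2 b2 : ℤ) (S : Multiset (ℤ × ℤ)) : ℚ :=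
  Finset.univ.inf' (Finset.univ_nonempty_iff.mpr ⟨1⟩)
    fun τ : Equiv.Perm (Fin S.toList.length) => h2Tau p a1 b1 a2 b2 (listFn S) τ


/-!
A lattice point enters `h` only through the integer `v(P) = D·w(P) = (b1-b2)x + (a2-a1)y`, a
multiple of `g`, so `h(S)` is the optimum of the assignment problem with cost
`c(a, b) = ⌈(p·b - a)/D⌉` on the multiset of values `v(P)`, `P ∈ S`. Lowering `K` of these
values, by `Δ ≥ gK` in total, lowers `Σ (p·b - a)` over any assignment by `(p-1)Δ`, while the
rounding in `D·c` adds at most `D - g` to each of the at most `2K` affected terms; as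
`(p-1)g ≥ 2D`, no assignment gets more expensive. By Hall's theorem the values of an admissible
multiset of size `nℓ` dominate, after reordering, those of `n` copies of a set `S*` of `ℓ`
points of `M(Δ)` of least weight, so `n·S*` is optimal among multisets and `S*` among sets.
Finally, an assignment on `n` copies of a set costs at least `n` times the optimum on the set:
its multiplicity matrix divided by `n` is doubly stochastic, hence by Birkhoff's theorem a
convex combination of permutation matrices.
-/

theorem exists_equiv_comp_eq_of_map_univ_eq {α ι κ : Type*} [Fintype ι] [Fintype κ]
    {x : ι → α} {y : κ → α} (h : univ.val.map x = univ.val.map y) :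
    ∃ e : ι ≃ κ, y ∘ e = x := by
  classical
  have hfiber : ∀ a, Fintype.card {i // x i = a} = Fintype.card {j // y j = a} := fun a => by
    have := congrArg (Multiset.count a) h
    simp only [Multiset.count_map, eq_comm (a := a)] at this
    rw [Fintype.card_subtype, Fintype.card_subtype]
    exact this
  exact ⟨Equiv.ofFiberEquiv fun a => Fintype.equivOfCardEq (hfiber a),
    funext (Equiv.ofFiberEquiv_map _)⟩

theorem map_univ_comp_fst {α ι : Type*} [Fintype ι] (f : ι → α) (n : ℕ) :
    (univ.val.map fun k : ι × Fin n => f k.1) = n • univ.val.map f := by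
  classical
  ext z
  simp only [Multiset.count_map, Multiset.count_nsmul]
  change #{k : ι × Fin n | z = f k.1} = n * #{a | z = f a}
  rw [← univ_product_univ, filter_product_left (fun a => z = f a), card_product, card_univ,
    Fintype.card_fin, mul_comm]

theorem exists_equiv_le_of_card_filter_le {α ι κ : Type*} [LinearOrder α] [Fintype ι]
    [Fintype κ] {a : ι → α} {b : κ → α} (hcard : Fintype.card κ = Fintype.card ι)
    (h : ∀ X, #{j | b j ≤ X} ≤ #{i | a i ≤ X}) : ∃ e : κ ≃ ι, ∀ j, a (e j) ≤ b j := by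
  classical
  have hall : ∀ A : Finset κ, #A ≤ #{i | ∃ j ∈ A, a i ≤ b j} := fun A => by
    rcases A.eq_empty_or_nonempty with rfl | hA
    · simp
    obtain ⟨j₀, hj₀, hmax⟩ := A.exists_max_image b hA
    calc #A ≤ #{j | b j ≤ b j₀} := card_le_card fun j hj => by simpa using hmax j hj
      _ ≤ #{i | a i ≤ b j₀} := h _
      _ ≤ #{i | ∃ j ∈ A, a i ≤ b j} := card_le_card fun i hi => by
          simp only [mem_filter, mem_univ, true_and] at hi ⊢
          exact ⟨j₀, hj₀, hi⟩
  obtain ⟨f, hf, hfab⟩ :=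
    (Fintype.all_card_le_filter_rel_iff_exists_injective fun j i => a i ≤ b j).mp hall
  exact ⟨Equiv.ofBijective f ((Fintype.bijective_iff_injective_and_card f).mpr ⟨hf, hcard⟩), hfab⟩

theorem le_sum_mul_of_mem_doublyStochastic {R ι : Type*} [Field R] [LinearOrder R]
    [IsStrictOrderedRing R] [Fintype ι] [DecidableEq ι] {C : ι → ι → R} {m : R}
    (hC : ∀ σ : Equiv.Perm ι, m ≤ ∑ a, C a (σ a)) {M : Matrix ι ι R}
    (hM : M ∈ doublyStochastic R ι) : m ≤ ∑ a, ∑ b, M a b * C a b := by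
  obtain ⟨w, hw0, hw1, rfl⟩ := exists_eq_sum_perm_of_mem_doublyStochastic hM
  have hperm : ∀ σ : Equiv.Perm ι, ∑ a, ∑ b, σ.permMatrix R a b * C a b = ∑ a, C a (σ a) := by
    intro σ
    simp [PEquiv.toMatrix_apply, Equiv.toPEquiv_apply]
  calc m = ∑ σ, w σ * m := by rw [← sum_mul, hw1, one_mul]
    _ ≤ ∑ σ, w σ * ∑ a, C a (σ a) :=
        sum_le_sum fun σ _ => mul_le_mul_of_nonneg_left (hC σ) (hw0 σ)
    _ = ∑ a, ∑ b, (∑ σ, w σ • σ.permMatrix R) a b * C a b := by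
        simp only [← hperm, mul_sum, Matrix.sum_apply, sum_mul, Matrix.smul_apply,
          smul_eq_mul, mul_assoc]
        rw [sum_comm]
        exact sum_congr rfl fun a _ => sum_comm

section Assignment

variable {α ι κ : Type*} [Fintype ι] [DecidableEq ι] [Fintype κ] [DecidableEq κ]

def assignMin (c : α → α → ℤ) (x : ι → α) : ℤ :=
  univ.inf' (univ_nonempty_iff.mpr ⟨1⟩)
    fun σ : Equiv.Perm ι => ∑ i, c (x i) (x (σ i))

variable (c : α → α → ℤ)

theorem assignMin_le (x : ι → α) (σ : Equiv.Perm ι) :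
    assignMin c x ≤ ∑ i, c (x i) (x (σ i)) :=
  inf'_le _ (mem_univ σ)

theorem le_assignMin {x : ι → α} {m : ℤ} (h : ∀ σ : Equiv.Perm ι, m ≤ ∑ i, c (x i) (x (σ i))) :
    m ≤ assignMin c x :=
  le_inf' _ _ fun σ _ => h σ

theorem exists_assignMin_eq (x : ι → α) :
    ∃ σ : Equiv.Perm ι, assignMin c x = ∑ i, c (x i) (x (σ i)) := by
  obtain ⟨σ, -, h⟩ := exists_mem_eq_inf' (univ_nonempty_iff.mpr ⟨(1 : Equiv.Perm ι)⟩)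
    fun σ : Equiv.Perm ι => ∑ i, c (x i) (x (σ i))
  exact ⟨σ, h⟩

theorem assignMin_comp_equiv (x : ι → α) (e : κ ≃ ι) : assignMin c (x ∘ e) = assignMin c x := by
  have hsum : ∀ σ : Equiv.Perm κ,
      ∑ j, c (x (e j)) (x (e (σ j))) = ∑ i, c (x i) (x (e.permCongr σ i)) := fun σ =>
    Fintype.sum_equiv e _ _ fun j => by simp [Equiv.permCongr_apply]
  refine le_antisymm (le_assignMin c fun τ => ?_) (le_assignMin c fun σ => ?_)
  · refine (assignMin_le c _ (e.permCongr.symm τ)).trans_eq ?_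
    simp only [Function.comp_apply, hsum, Equiv.apply_symm_apply]
  · exact (assignMin_le c x (e.permCongr σ)).trans_eq (hsum σ).symm

theorem assignMin_congr {x : ι → α} {y : κ → α}
    (h : univ.val.map x = univ.val.map y) : assignMin c x = assignMin c y := by
  obtain ⟨e, rfl⟩ := exists_equiv_comp_eq_of_map_univ_eq h
  exact assignMin_comp_equiv c y e

def fstCountMatrix {n : ℕ} (σ : Equiv.Perm (ι × Fin n)) : Matrix ι ι ℚ :=
  Matrix.of fun a b => ∑ k, if k.1 = a ∧ (σ k).1 = b then 1 else 0

theorem sum_fst_perm_eq_sum_fstCountMatrix_mul (x : ι → α) {n : ℕ} (σ : Equiv.Perm (ι × Fin n)) :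
    ((∑ k, c (x k.1) (x (σ k).1) : ℤ) : ℚ) =
      ∑ a, ∑ b, fstCountMatrix σ a b * c (x a) (x b) := by
  have hsingle : ∀ k : ι × Fin n, (c (x k.1) (x (σ k).1) : ℚ) =
      ∑ a, ∑ b, if k.1 = a ∧ (σ k).1 = b then (c (x a) (x b) : ℚ) else 0 := fun k => by
    simp [ite_and]
  push_cast
  simp only [hsingle, fstCountMatrix, Matrix.of_apply, sum_mul, ite_mul, one_mul, zero_mul]
  rw [sum_comm]
  exact sum_congr rfl fun a _ => sum_comm

theorem inv_smul_fstCountMatrix_mem_doublyStochastic {n : ℕ} (hn : 0 < n)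
    (σ : Equiv.Perm (ι × Fin n)) : (n : ℚ)⁻¹ • fstCountMatrix σ ∈ doublyStochastic ℚ ι := by
  have hfiber : ∀ a : ι, ∑ k : ι × Fin n, (if k.1 = a then (1 : ℚ) else 0) = n := fun a => by
    rw [Fintype.sum_prod_type_right]
    simp
  rw [mem_doublyStochastic_iff_sum]
  refine ⟨fun a b => ?_, fun a => ?_, fun b => ?_⟩
  · simp only [fstCountMatrix, Matrix.smul_apply, Matrix.of_apply, smul_eq_mul]
    positivity
  · simp only [fstCountMatrix, Matrix.smul_apply, Matrix.of_apply, smul_eq_mul, ← mul_sum]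
    rw [sum_comm]
    simp [ite_and, hfiber, hn.ne']
  · simp only [fstCountMatrix, Matrix.smul_apply, Matrix.of_apply, smul_eq_mul, ← mul_sum]
    rw [sum_comm]
    simp only [ite_and, sum_ite_eq, mem_univ, if_true]
    rw [Equiv.sum_comp σ (fun k => if k.1 = b then (1 : ℚ) else 0), hfiber]
    simp [hn.ne']

theorem assignMin_comp_fst (x : ι → α) (n : ℕ) :
    assignMin c (fun k : ι × Fin n => x k.1) = n * assignMin c x := by
  refine le_antisymm ?_ (le_assignMin c fun σ => ?_)
  · obtain ⟨σ, hσ⟩ := exists_assignMin_eq c x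
    refine (assignMin_le c _ (σ.prodCongr (Equiv.refl (Fin n)))).trans_eq ?_
    simp [hσ, Fintype.sum_prod_type, mul_sum]
  · rcases Nat.eq_zero_or_pos n with rfl | hn
    · simp
    have key := le_sum_mul_of_mem_doublyStochastic (C := fun a b => (c (x a) (x b) : ℚ))
      (m := assignMin c x) (fun τ => by exact_mod_cast assignMin_le c x τ)
      (inv_smul_fstCountMatrix_mem_doublyStochastic hn σ)
    simp only [Matrix.smul_apply, smul_eq_mul, mul_assoc, ← mul_sum,
      ← sum_fst_perm_eq_sum_fstCountMatrix_mul] at key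
    rw [le_inv_mul_iff₀ (by exact_mod_cast hn)] at key
    exact_mod_cast key

end Assignment

theorem Int.ceil_intCast_div_mul_le {z D g : ℤ} (hD : 0 < D) (hgz : g ∣ z)
    (hgD : g ∣ D) : ⌈(z : ℚ) / D⌉ * D ≤ z + D - g := by
  have hlt : ⌈(z : ℚ) / D⌉ * D < z + D := by
    have h := Int.ceil_lt_add_one ((z : ℚ) / D)
    rw [← mul_lt_mul_iff_of_pos_right (show (0 : ℚ) < D by exact_mod_cast hD), add_mul,
      div_mul_cancel₀ _ (by positivity), one_mul] at h
    exact_mod_cast h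
  have hdvd : g ∣ z + D - ⌈(z : ℚ) / D⌉ * D := dvd_sub (dvd_add hgz hgD) (hgD.mul_left _)
  linarith [Int.le_of_dvd (by linarith) hdvd]

theorem Int.le_ceil_intCast_div_mul {z D : ℤ} (hD : 0 < D) : z ≤ ⌈(z : ℚ) / D⌉ * D := by
  have h := Int.le_ceil ((z : ℚ) / D)
  rwa [div_le_iff₀ (by exact_mod_cast hD), ← Int.cast_mul, Int.cast_le] at h

def assignCost (p D a b : ℤ) : ℤ := ⌈((p * b - a : ℤ) : ℚ) / D⌉

section Cost

variable {p D g : ℤ}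

theorem assignCost_mul_le (hD : 0 < D) (hgD : g ∣ D) {a b a' b' : ℤ}
    (ha : a' ≤ a) (hb : b' ≤ b) (hga' : g ∣ a') (hgb' : g ∣ b') :
    assignCost p D a' b' * D ≤ assignCost p D a b * D + ((p * b' - a') - (p * b - a)) +
      (D - g) * ((if a' < a then 1 else 0) + (if b' < b then 1 else 0)) := by
  by_cases hab : a' = a ∧ b' = b
  · obtain ⟨rfl, rfl⟩ := hab
    simp
  have hind : 1 ≤ (if a' < a then 1 else 0) + (if b' < b then (1 : ℤ) else 0) := by
    split_ifs <;> omega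
  have hgD' : g ≤ D := Int.le_of_dvd hD hgD
  have hupper := Int.ceil_intCast_div_mul_le hD (dvd_sub (hgb'.mul_left p) hga') hgD
  have hlower := Int.le_ceil_intCast_div_mul (z := p * b - a) hD
  unfold assignCost
  nlinarith

theorem sum_assignCost_le_of_le {ι : Type*} [Fintype ι] (hD : 0 < D) (hg : 0 < g) (hgD : g ∣ D)
    (hp : 2 * D ≤ (p - 1) * g) {x x' : ι → ℤ} (hle : ∀ i, x' i ≤ x i)
    (hgx : ∀ i, g ∣ x i) (hgx' : ∀ i, g ∣ x' i) (σ : Equiv.Perm ι) :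
    ∑ i, assignCost p D (x' i) (x' (σ i)) ≤ ∑ i, assignCost p D (x i) (x (σ i)) := by
  set χ : ι → ℤ := fun i => if x' i < x i then 1 else 0
  have hχ : ∀ i, 0 ≤ χ i := fun i => by dsimp only [χ]; split_ifs <;> omega
  have hgχ : ∀ i, g * χ i ≤ x i - x' i := fun i => by
    dsimp only [χ]
    split_ifs with h
    · linarith [Int.le_of_dvd (by omega) (dvd_sub (hgx i) (hgx' i))]
    · linarith [hle i]
  have hedge : ∀ i, assignCost p D (x' i) (x' (σ i)) * D ≤ assignCost p D (x i) (x (σ i)) * D +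
      ((p * x' (σ i) - x' i) - (p * x (σ i) - x i)) + (D - g) * (χ i + χ (σ i)) := fun i =>
    assignCost_mul_le hD hgD (hle i) (hle (σ i)) (hgx' i) (hgx' (σ i))
  have hsum := sum_le_sum fun i (_ : i ∈ univ) => hedge i
  simp only [sum_add_distrib, sum_sub_distrib, ← sum_mul, ← mul_sum,
    Equiv.sum_comp σ x, Equiv.sum_comp σ x', Equiv.sum_comp σ χ] at hsum
  have hgK : g * ∑ i, χ i ≤ ∑ i, x i - ∑ i, x' i := by
    rw [mul_sum, ← sum_sub_distrib]
    exact sum_le_sum fun i _ => hgχ i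
  have hK : 0 ≤ ∑ i, χ i := sum_nonneg fun i _ => hχ i
  have hp1 : 0 ≤ p - 1 := by nlinarith
  refine le_of_mul_le_mul_right ?_ hD
  nlinarith [mul_le_mul_of_nonneg_left hgK hp1, mul_le_mul_of_nonneg_right hp hK]

theorem assignMin_assignCost_le_of_le {ι : Type*} [Fintype ι] [DecidableEq ι] (hD : 0 < D)
    (hg : 0 < g) (hgD : g ∣ D) (hp : 2 * D ≤ (p - 1) * g) {x x' : ι → ℤ} (hle : ∀ i, x' i ≤ x i)
    (hgx : ∀ i, g ∣ x i) (hgx' : ∀ i, g ∣ x' i) :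
    assignMin (assignCost p D) x' ≤ assignMin (assignCost p D) x := by
  obtain ⟨σ, hσ⟩ := exists_assignMin_eq (assignCost p D) x
  rw [hσ]
  exact (assignMin_le _ x' σ).trans (sum_assignCost_le_of_le hD hg hgD hp hle hgx hgx' σ)

end Cost

def IsLowestSubset {β α : Type*} [LE α] (v : β → α) (M : Set β) (S : Finset β) : Prop :=
  ↑S ⊆ M ∧ ∀ P ∈ S, ∀ Q ∈ M, Q ∉ S → v P ≤ v Q

theorem exists_isLowestSubset {β : Type*} [DecidableEq β] {v : β → ℤ} {M : Set β}
    (hfin : ∀ X, {P | P ∈ M ∧ v P ≤ X}.Finite) (hinf : M.Infinite) (l : ℕ) :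
    ∃ S, IsLowestSubset v M S ∧ #S = l := by
  obtain ⟨A, hAM, hAcard⟩ := hinf.exists_subset_card_eq l
  set X := ∑ P ∈ A, |v P|
  set F := (hfin X).toFinset
  have hF : ∀ {P}, P ∈ F ↔ P ∈ M ∧ v P ≤ X := by simp [F]
  have hAF : A ⊆ F := fun P hP =>
    hF.mpr ⟨hAM hP, (le_abs_self _).trans
      (single_le_sum (f := fun P => |v P|) (fun _ _ => abs_nonneg _) hP)⟩
  obtain ⟨S, hS, hmin⟩ := (F.powersetCard l).exists_min_image (fun S => ∑ P ∈ S, v P)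
    ⟨A, mem_powersetCard.mpr ⟨hAF, hAcard⟩⟩
  rw [mem_powersetCard] at hS
  refine ⟨S, ⟨fun P hP => (hF.mp (hS.1 hP)).1, fun P hP Q hQM hQS => ?_⟩, hS.2⟩
  by_contra! hlt
  have hQF : Q ∈ F := hF.mpr ⟨hQM, hlt.le.trans (hF.mp (hS.1 hP)).2⟩
  have hQ : Q ∉ S.erase P := fun h => hQS (mem_of_mem_erase h)
  have hswap := hmin (insert Q (S.erase P)) <| mem_powersetCard.mpr
    ⟨insert_subset hQF ((erase_subset P S).trans hS.1), by
      rw [card_insert_of_notMem hQ, card_erase_add_one hP, hS.2]⟩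
  rw [sum_insert hQ, ← add_sum_erase S v hP] at hswap
  linarith

theorem IsLowestSubset.countP_le {β α : Type*} [LinearOrder α] [DecidableEq β] {v : β → α}
    {M : Set β} {S : Finset β} (hS : IsLowestSubset v M S) {T : Multiset β}
    (hTM : ∀ P ∈ T, P ∈ M) {N : ℕ} (hcount : ∀ P, T.count P ≤ N) (hcard : T.card = N * #S)
    (X : α) : T.countP (fun P => v P ≤ X) ≤ N * #{P ∈ S | v P ≤ X} := by
  set U := (T.filter fun P => v P ≤ X).toFinset
  have hU : ∀ {P}, P ∈ U ↔ P ∈ T ∧ v P ≤ X := by simp [U]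
  have hTU : T.countP (fun P => v P ≤ X) ≤ N * #U := by
    rw [Multiset.countP_eq_card_filter, ← Multiset.toFinset_sum_count_eq, mul_comm,
      ← smul_eq_mul, ← sum_const]
    exact sum_le_sum fun P _ =>
      (Multiset.count_le_of_le P (Multiset.filter_le _ _)).trans (hcount P)
  by_cases hUS : U ⊆ S
  · refine hTU.trans (Nat.mul_le_mul_left _ (card_le_card fun P hP => ?_))
    exact mem_filter.mpr ⟨hUS hP, (hU.mp hP).2⟩
  obtain ⟨Q, hQU, hQS⟩ := not_subset.mp hUS
  have hall : {P ∈ S | v P ≤ X} = S := filter_true_of_mem fun P hP =>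
    (hS.2 P hP Q (hTM Q (hU.mp hQU).1) hQS).trans (hU.mp hQU).2
  rw [hall, ← hcard]
  exact Multiset.countP_le_card _ _

def wtNum (a1 b1 a2 b2 : ℤ) (P : ℤ × ℤ) : ℤ := (b1 - b2) * P.1 + (a2 - a1) * P.2

section Geometry

variable {a1 b1 a2 b2 : ℤ}

theorem wt_smul_sub (p : ℤ) (P Q : ℤ × ℤ) :
    wt a1 b1 a2 b2 (p • Q - P) =
      ((p * wtNum a1 b1 a2 b2 Q - wtNum a1 b1 a2 b2 P : ℤ) : ℚ) /
        ((a2 * b1 - a1 * b2 : ℤ) : ℚ) := by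
  simp only [wt, wtNum, Prod.fst_sub, Prod.snd_sub, Prod.smul_fst, Prod.smul_snd, smul_eq_mul]
  congr 2
  ring

theorem hMin_eq_assignMin (p : ℤ) (S : Multiset (ℤ × ℤ)) :
    hMin p a1 b1 a2 b2 S =
      assignMin (assignCost p (a2 * b1 - a1 * b2)) fun k => wtNum a1 b1 a2 b2 (listFn S k) := by
  simp only [hMin, hTau, assignMin, assignCost, wt_smul_sub]

theorem map_univ_listFn (S : Multiset (ℤ × ℤ)) : univ.val.map (listFn S) = S := by
  rw [Fin.univ_val_map, listFn, List.ofFn_get, Multiset.coe_toList]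

theorem card_filter_listFn (S : Multiset (ℤ × ℤ)) (q : ℤ × ℤ → Prop) [DecidablePred q] :
    #{k | q (listFn S k)} = S.countP q := by
  conv_rhs => rw [← map_univ_listFn S, Multiset.countP_map]
  rfl

theorem wtNum_eq_mul {P : ℤ × ℤ} {s t : ℚ} (hx : (P.1 : ℚ) = s * a1 + t * a2)
    (hy : (P.2 : ℚ) = s * b1 + t * b2) :
    (wtNum a1 b1 a2 b2 P : ℚ) = (s + t) * (a2 * b1 - a1 * b2 : ℤ) := by
  simp only [wtNum]
  push_cast
  rw [hx, hy]
  ring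

theorem finite_setOf_mem_MDelta_wtNum_le (hD : 0 < a2 * b1 - a1 * b2) (X : ℤ) :
    {P | P ∈ MDelta a1 b1 a2 b2 ∧ wtNum a1 b1 a2 b2 P ≤ X}.Finite := by
  set A := |a1| + |a2| + |b1| + |b2|
  refine (Set.finite_Icc (-(|X| * A), -(|X| * A)) (|X| * A, |X| * A)).subset ?_
  rintro P ⟨⟨s, t, hs, ht, hx, hy⟩, hPX⟩
  have hst : s + t ≤ |X| := by
    have hD1 : (1 : ℚ) ≤ (a2 * b1 - a1 * b2 : ℤ) := by exact_mod_cast hD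
    have hle : (wtNum a1 b1 a2 b2 P : ℚ) ≤ |X| := by exact_mod_cast hPX.trans (le_abs_self X)
    rw [wtNum_eq_mul hx hy] at hle
    nlinarith
  have hbound : ∀ {u v z : ℤ}, |u| + |v| ≤ A → (z : ℚ) = s * u + t * v → |z| ≤ |X| * A := by
    intro u v z huv hz
    have hz' : |(z : ℚ)| ≤ (s + t) * (|(u : ℚ)| + |(v : ℚ)|) := by
      rw [hz]
      calc |s * u + t * v| ≤ s * |(u : ℚ)| + t * |(v : ℚ)| := by
            simpa [abs_mul, abs_of_nonneg hs, abs_of_nonneg ht] using abs_add_le (s * u) (t * v)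
        _ ≤ (s + t) * (|(u : ℚ)| + |(v : ℚ)|) := by
            nlinarith [mul_nonneg hs (abs_nonneg (v : ℚ)), mul_nonneg ht (abs_nonneg (u : ℚ))]
    have hA : (s + t) * (|(u : ℚ)| + |(v : ℚ)|) ≤ |X| * A :=
      mul_le_mul hst (by exact_mod_cast huv) (by positivity) (by positivity)
    exact_mod_cast hz'.trans hA
  have h1 := abs_le.mp (hbound (by simp only [A]; linarith [abs_nonneg b1, abs_nonneg b2]) hx)
  have h2 := abs_le.mp (hbound (by simp only [A]; linarith [abs_nonneg a1, abs_nonneg a2]) hy)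
  exact ⟨Prod.mk_le_mk.mpr ⟨h1.1, h2.1⟩, Prod.mk_le_mk.mpr ⟨h1.2, h2.2⟩⟩

theorem infinite_MDelta (hD : 0 < a2 * b1 - a1 * b2) : (MDelta a1 b1 a2 b2).Infinite := by
  refine Set.infinite_of_injective_forall_mem
    (f := fun j : ℕ => ((j : ℤ) * a1, (j : ℤ) * b1)) (fun j k hjk => ?_)
    fun j => ⟨j, 0, by positivity, le_rfl, by push_cast; ring, by push_cast; ring⟩
  have h := congrArg (wtNum a1 b1 a2 b2) hjk
  simp only [wtNum] at h
  have : (j : ℤ) * (a2 * b1 - a1 * b2) = k * (a2 * b1 - a1 * b2) := by linarith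
  exact_mod_cast mul_right_cancel₀ hD.ne' this

theorem gcd_dvd_wtNum (P : ℤ × ℤ) : (Int.gcd (a1 - a2) (b1 - b2) : ℤ) ∣ wtNum a1 b1 a2 b2 P :=
  dvd_add ((Int.gcd_dvd_right _ _).mul_right _)
    ((dvd_sub_comm.mp (Int.gcd_dvd_left _ _)).mul_right _)

theorem gcd_dvd_det : (Int.gcd (a1 - a2) (b1 - b2) : ℤ) ∣ a2 * b1 - a1 * b2 := by
  convert gcd_dvd_wtNum (a1, b1) using 1
  simp only [wtNum]
  ring

theorem gcd_pos_of_det_pos (hD : 0 < a2 * b1 - a1 * b2) :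
    0 < (Int.gcd (a1 - a2) (b1 - b2) : ℤ) := by
  refine Int.natCast_pos.mpr (Int.gcd_pos_iff.mpr ?_)
  by_contra! h
  obtain ⟨ha, hb⟩ := h
  rw [sub_eq_zero] at ha hb
  subst ha hb
  simp at hD

end Geometry

section HMin

variable {p a1 b1 a2 b2 : ℤ}

theorem map_univ_wtNum_listFn (S : Multiset (ℤ × ℤ)) :
    (univ.val.map fun k => wtNum a1 b1 a2 b2 (listFn S k)) = S.map (wtNum a1 b1 a2 b2) := by
  conv_rhs => rw [← map_univ_listFn S, Multiset.map_map]
  rfl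

theorem hMin_nsmul (S : Multiset (ℤ × ℤ)) (n : ℕ) :
    hMin p a1 b1 a2 b2 (n • S) = n * hMin p a1 b1 a2 b2 S := by
  rw [hMin_eq_assignMin, hMin_eq_assignMin, ← assignMin_comp_fst]
  apply assignMin_congr
  rw [map_univ_comp_fst (fun k => wtNum a1 b1 a2 b2 (listFn S k)), map_univ_wtNum_listFn,
    map_univ_wtNum_listFn, Multiset.map_nsmul]

theorem hMin_le_hMin_of_countP_le (hD : 0 < a2 * b1 - a1 * b2)
    (hp : 2 * (a2 * b1 - a1 * b2) ≤ (p - 1) * Int.gcd (a1 - a2) (b1 - b2))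
    {S T : Multiset (ℤ × ℤ)} (hcard : T.card = S.card)
    (h : ∀ X, T.countP (fun P => wtNum a1 b1 a2 b2 P ≤ X) ≤
      S.countP (fun P => wtNum a1 b1 a2 b2 P ≤ X)) :
    hMin p a1 b1 a2 b2 S ≤ hMin p a1 b1 a2 b2 T := by
  obtain ⟨e, he⟩ := exists_equiv_le_of_card_filter_le
    (a := fun k => wtNum a1 b1 a2 b2 (listFn S k)) (b := fun k => wtNum a1 b1 a2 b2 (listFn T k))
    (by simp [hcard]) fun X =>
      (card_filter_listFn T _).trans_le ((h X).trans_eq (card_filter_listFn S _).symm)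
  rw [hMin_eq_assignMin, hMin_eq_assignMin, ← assignMin_comp_equiv _ _ e]
  exact assignMin_assignCost_le_of_le hD (gcd_pos_of_det_pos hD) gcd_dvd_det hp he
    (fun _ => gcd_dvd_wtNum _) fun _ => gcd_dvd_wtNum _

theorem IsLowestSubset.nsmul_hMin_le (hD : 0 < a2 * b1 - a1 * b2)
    (hp : 2 * (a2 * b1 - a1 * b2) ≤ (p - 1) * Int.gcd (a1 - a2) (b1 - b2)) {S : Finset (ℤ × ℤ)}
    (hS : IsLowestSubset (wtNum a1 b1 a2 b2) (MDelta a1 b1 a2 b2) S) {T : Multiset (ℤ × ℤ)}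
    (hTM : ∀ P ∈ T, P ∈ MDelta a1 b1 a2 b2) {N : ℕ} (hcount : ∀ P, T.count P ≤ N)
    (hcard : T.card = N * #S) : N * hMin p a1 b1 a2 b2 S.val ≤ hMin p a1 b1 a2 b2 T := by
  rw [← hMin_nsmul]
  refine hMin_le_hMin_of_countP_le hD hp (by simp [hcard]) fun X => ?_
  rw [Multiset.countP_nsmul]
  convert hS.countP_le hTM hcount hcard X using 2
  exact Multiset.countP_eq_card_filter _ _

end HMin

theorem statement10_general (p a1 b1 a2 b2 : ℤ)
    (hD : 0 < a2 * b1 - a1 * b2)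
    (hpg : 2 * ((a2 * b1 - a1 * b2 : ℤ) : ℚ) /
      (Int.gcd (a1 - a2) (b1 - b2) : ℚ) + 1 < (p : ℚ))
    (n l : ℕ) :
    ∃ m : ℤ,
      IsLeast {h : ℤ | ∃ S : Finset (ℤ × ℤ),
        (S : Set (ℤ × ℤ)) ⊆ MDelta a1 b1 a2 b2 ∧ S.card = l ∧
        h = hMin p a1 b1 a2 b2 S.val} m ∧
      IsLeast {h : ℤ | ∃ S : Multiset (ℤ × ℤ),
        (∀ P ∈ S, P ∈ MDelta a1 b1 a2 b2) ∧ Multiset.card S = n * l ∧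
        (∀ P : ℤ × ℤ, S.count P ≤ n) ∧
        h = hMin p a1 b1 a2 b2 S} ((n : ℤ) * m) := by
  have hp : 2 * (a2 * b1 - a1 * b2) ≤ (p - 1) * Int.gcd (a1 - a2) (b1 - b2) := by
    have hg : (0 : ℚ) < Int.gcd (a1 - a2) (b1 - b2) := by
      exact_mod_cast gcd_pos_of_det_pos hD
    rw [← lt_sub_iff_add_lt, div_lt_iff₀ hg] at hpg
    exact_mod_cast hpg.le
  obtain ⟨S, hS, hScard⟩ := exists_isLowestSubset (finite_setOf_mem_MDelta_wtNum_le hD)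
    (infinite_MDelta hD) l
  refine ⟨hMin p a1 b1 a2 b2 S.val, ⟨⟨S, hS.1, hScard, rfl⟩, ?_⟩,
    ⟨⟨n • S.val, fun P hP => hS.1 (Multiset.mem_of_mem_nsmul hP), by simp [hScard],
      fun P => ?_, (hMin_nsmul _ _).symm⟩, ?_⟩⟩
  · rintro _ ⟨S', hS'M, hS'card, rfl⟩
    simpa using hS.nsmul_hMin_le hD hp (N := 1) (fun P hP => hS'M hP)
      (Multiset.nodup_iff_count_le_one.mp S'.nodup) (by simp [hS'card, hScard])
  · rw [Multiset.count_nsmul]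
    exact mul_le_of_le_one_right n.zero_le (Multiset.nodup_iff_count_le_one.mp S.nodup P)
  · rintro _ ⟨T, hTM, hTcard, hTcount, rfl⟩
    exact hS.nsmul_hMin_le hD hp hTM hTcount (by rw [hTcard, hScard])

/-- Let `g = gcd(a1-a2, b1-b2)` and `p` a prime with `p ∤ D` and
`p > 2·D/g + 1`.  For all positive `n, ℓ`, the minimum of `h(S)` over finite
multisets of points of `M(Δ)` of cardinality `n·ℓ` with every multiplicity at
most `n` equals `n` times the minimum of `h(S)` over subsets of `M(Δ)` of
cardinality `ℓ`. -/
theorem statement10 (p a1 b1 a2 b2 : ℤ)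
    (ha1 : 0 ≤ a1) (hb1 : 0 ≤ b1) (ha2 : 0 ≤ a2) (hb2 : 0 ≤ b2)
    (hD : 0 < a2 * b1 - a1 * b2)
    (hp : Prime p) (hpD : ¬ p ∣ (a2 * b1 - a1 * b2))
    (hpg : 2 * ((a2 * b1 - a1 * b2 : ℤ) : ℚ) /
      (Int.gcd (a1 - a2) (b1 - b2) : ℚ) + 1 < (p : ℚ))
    (n l : ℕ) (hn : 0 < n) (hl : 0 < l) :
    ∃ m : ℤ,
      IsLeast {h : ℤ | ∃ S : Finset (ℤ × ℤ),
        (S : Set (ℤ × ℤ)) ⊆ MDelta a1 b1 a2 b2 ∧ S.card = l ∧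
        h = hMin p a1 b1 a2 b2 S.val} m ∧
      IsLeast {h : ℤ | ∃ S : Multiset (ℤ × ℤ),
        (∀ P ∈ S, P ∈ MDelta a1 b1 a2 b2) ∧ Multiset.card S = n * l ∧
        (∀ P : ℤ × ℤ, S.count P ≤ n) ∧
        h = hMin p a1 b1 a2 b2 S} ((n : ℤ) * m) :=
  statement10_general p a1 b1 a2 b2 hD hpg n l
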